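/- arXiv:math/0507010 — 5 statements merged into one kernel-verified Lean document; each statement's English description precedes it below -/
import Mathlib

section
/- Let $m > 2$ and let $d, \delta_1, \ldots, \delta_m$ be nonnegative real numbers with $d = \sum_{i=1}^m \delta_i$, and set $d' = \sum_{i=2}^{m-1} \delta_i$. Then $\sum_{i<j} \delta_i \delta_j \leq \frac{1}{4}(d+d')^2 - \frac{m-1}{2(m-2)} d'^2$. -/
/-!
Write `a`, `b` for the two end weights, `S = d'` for the sum of the `k = m - 2` interior ones and
`Q` for the sum of their squares. Since `2 ∑_{i<j} δ_i δ_j = d² - ∑ δ_i²`, the difference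
between the two sides is `(a - b)² / 4 + (Q - S² / k) / 2`, which is nonnegative by
Cauchy–Schwarz `S² ≤ k Q`.
-/

open Finset

theorem sq_sum_eq_two_mul_sum_ite_lt_add_sum_sq {ι R : Type*} [Fintype ι] [LinearOrder ι]
    [CommRing R] (f : ι → R) :
    (∑ i, f i) ^ 2 = 2 * ∑ i, ∑ j, (if i < j then f i * f j else 0) + ∑ i, f i ^ 2 := by
  have split : ∀ i j, f i * f j = (if i < j then f i * f j else 0)
      + (if j < i then f j * f i else 0) + (if i = j then f i * f j else 0) := by
    intro i j
    rcases lt_trichotomy i j with h | rfl | h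
    · simp [h, h.not_gt, h.ne]
    · simp
    · simp [h, h.not_gt, h.ne', mul_comm]
  rw [sq, sum_mul_sum, sum_congr rfl fun i _ => sum_congr rfl fun j _ => split i j]
  simp only [sum_add_distrib]
  rw [sum_comm (f := fun i j => if j < i then f j * f i else 0)]
  simp [two_mul, sq]

theorem Fin.sum_univ_eq_first_add_sum_interior_add_last {M : Type*} [AddCommMonoid M] {n : ℕ}
    (g : Fin (n + 2) → M) :
    ∑ i, g i = g 0 + ∑ i : Fin n, g i.castSucc.succ + g (Fin.last _) := by
  rw [Fin.sum_univ_succ, Fin.sum_univ_castSucc, Fin.succ_last]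
  exact (add_assoc _ _ _).symm

theorem pair_sum_le_of_sq_le_mul {k S Q a b : ℝ} (hk : 0 < k) (hS : S ^ 2 ≤ k * Q) :
    ((S + a + b) ^ 2 - (Q + a ^ 2 + b ^ 2)) / 2 ≤
      (1 / 4) * (2 * S + a + b) ^ 2 - (k + 1) / (2 * k) * S ^ 2 := by
  have hQ : S ^ 2 / k ≤ Q := by rwa [div_le_iff₀' hk]
  have hgap : (1 / 4) * (2 * S + a + b) ^ 2 - (k + 1) / (2 * k) * S ^ 2
      - ((S + a + b) ^ 2 - (Q + a ^ 2 + b ^ 2)) / 2 = (a - b) ^ 2 / 4 + (Q - S ^ 2 / k) / 2 := by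
    field_simp; ring
  linarith [sq_nonneg (a - b)]

theorem stmt2_general (m : ℕ) (hm : 2 < m) (d d' : ℝ) (δ : Fin m → ℝ)
    (hd : d = ∑ i, δ i)
    (hd' : d' = ∑ i : Fin m, if 0 < (i : ℕ) ∧ (i : ℕ) < m - 1 then δ i else 0) :
    (∑ i : Fin m, ∑ j : Fin m, if i < j then δ i * δ j else 0) ≤
      (1 / 4) * (d + d') ^ 2 - ((m : ℝ) - 1) / (2 * ((m : ℝ) - 2)) * d' ^ 2 := by
  obtain ⟨n, rfl⟩ : ∃ n, m = n + 2 := ⟨m - 2, by omega⟩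
  have hd'_interior : d' = ∑ i : Fin n, δ i.castSucc.succ := by
    rw [hd', Fin.sum_univ_eq_first_add_sum_interior_add_last]
    simp [Fin.val_last]
  have hd_split : d = δ 0 + d' + δ (Fin.last _) := by
    rw [hd, hd'_interior, Fin.sum_univ_eq_first_add_sum_interior_add_last]
  have hsq_split := Fin.sum_univ_eq_first_add_sum_interior_add_last (fun i => δ i ^ 2)
  have hcauchy : d' ^ 2 ≤ n * ∑ i : Fin n, δ i.castSucc.succ ^ 2 := by
    simpa [hd'_interior] using
      sq_sum_le_card_mul_sum_sq (s := univ) (f := fun i : Fin n => δ i.castSucc.succ)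
  have hn : (0 : ℝ) < n := by exact_mod_cast (by omega : 0 < n)
  have hpairs := sq_sum_eq_two_mul_sum_ite_lt_add_sum_sq δ
  rw [← hd, hsq_split, hd_split] at hpairs
  calc (∑ i : Fin (n + 2), ∑ j : Fin (n + 2), if i < j then δ i * δ j else 0)
      = ((d' + δ 0 + δ (Fin.last _)) ^ 2
          - (∑ i : Fin n, δ i.castSucc.succ ^ 2 + δ 0 ^ 2 + δ (Fin.last _) ^ 2)) / 2 := by
        linarith
    _ ≤ (1 / 4) * (2 * d' + δ 0 + δ (Fin.last _)) ^ 2 - (n + 1) / (2 * n) * d' ^ 2 :=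
        pair_sum_le_of_sq_le_mul hn hcauchy
    _ = _ := by rw [hd_split]; push_cast; ring

theorem stmt2 (m : ℕ) (hm : 2 < m) (d d' : ℝ) (δ : Fin m → ℝ)
    (hδ : ∀ i, 0 ≤ δ i) (hd : d = ∑ i, δ i)
    (hd' : d' = ∑ i : Fin m, if 0 < (i : ℕ) ∧ (i : ℕ) < m - 1 then δ i else 0) :
    (∑ i : Fin m, ∑ j : Fin m, if i < j then δ i * δ j else 0) ≤
      (1 / 4) * (d + d') ^ 2 - ((m : ℝ) - 1) / (2 * ((m : ℝ) - 2)) * d' ^ 2 :=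
  stmt2_general m hm d d' δ hd hd'
end

section
/- Let $m \geq 2$ and let $d, q, \delta_1, \ldots, \delta_m$ be nonnegative real numbers with $d = \sum_{i=1}^m \delta_i$, $\delta_1 \geq q$ and $\delta_m \geq q$. If $mq \leq d$ then $\sum_{i<j} \delta_i\delta_j \leq \frac{m-1}{2m} d^2$, and if $mq > d$ then $\sum_{i<j} \delta_i\delta_j \leq (d-q)^2 - \frac{m-1}{2(m-2)}(d-2q)^2$. -/
set_option maxHeartbeats 1000000 in
theorem stmt3 (m : ℕ) (hm : 2 ≤ m) (d q : ℝ) (δ : Fin m → ℝ)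
    (hδ : ∀ i, 0 ≤ δ i) (hq : 0 ≤ q) (hd : d = ∑ i, δ i)
    (h1 : q ≤ δ ⟨0, by omega⟩) (h2 : q ≤ δ ⟨m - 1, by omega⟩) :
    ((m : ℝ) * q ≤ d →
      (∑ i : Fin m, ∑ j : Fin m, if i < j then δ i * δ j else 0) ≤
        ((m : ℝ) - 1) / (2 * m) * d ^ 2) ∧
    (d < (m : ℝ) * q →
      (∑ i : Fin m, ∑ j : Fin m, if i < j then δ i * δ j else 0) ≤
        (d - q) ^ 2 - ((m : ℝ) - 1) / (2 * ((m : ℝ) - 2)) * (d - 2 * q) ^ 2) := by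
  set S := ∑ i : Fin m, ∑ j : Fin m, if i < j then δ i * δ j else 0 with hS
  -- key identity: d^2 = 2*S + ∑ δ i ^ 2
  have key : d ^ 2 = 2 * S + ∑ i, δ i ^ 2 := by
    have e1 : d ^ 2 = ∑ i : Fin m, ∑ j : Fin m, δ i * δ j := by
      rw [hd, sq, Finset.sum_mul_sum]
    have e2 : ∀ i j : Fin m, δ i * δ j =
        (if i < j then δ i * δ j else 0) + (if j < i then δ i * δ j else 0)
          + (if i = j then δ i * δ j else 0) := by
      intro i j
      rcases lt_trichotomy i j with h | h | h
      · simp [h, not_lt_of_gt h, h.ne]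
      · simp [h]
      · simp [h, not_lt_of_gt h, h.ne']
    have e3 : (∑ i : Fin m, ∑ j : Fin m, if j < i then δ i * δ j else 0) = S := by
      rw [hS, Finset.sum_comm]
      apply Finset.sum_congr rfl; intro j _
      apply Finset.sum_congr rfl; intro i _
      rw [mul_comm]
    have e4 : (∑ i : Fin m, ∑ j : Fin m, if i = j then δ i * δ j else 0)
        = ∑ i, δ i ^ 2 := by
      apply Finset.sum_congr rfl; intro i _
      rw [Finset.sum_ite_eq (Finset.univ) i (fun j => δ i * δ j)]
      simp [sq]
    calc d ^ 2 = ∑ i : Fin m, ∑ j : Fin m, δ i * δ j := e1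
      _ = (∑ i : Fin m, ∑ j : Fin m, if i < j then δ i * δ j else 0)
          + (∑ i : Fin m, ∑ j : Fin m, if j < i then δ i * δ j else 0)
          + (∑ i : Fin m, ∑ j : Fin m, if i = j then δ i * δ j else 0) := by
            rw [← Finset.sum_add_distrib, ← Finset.sum_add_distrib]
            refine Finset.sum_congr rfl fun i _ => ?_
            rw [← Finset.sum_add_distrib, ← Finset.sum_add_distrib]
            exact Finset.sum_congr rfl fun j _ => e2 i j
      _ = 2 * S + ∑ i, δ i ^ 2 := by rw [e3, e4]; ring
  have hm0 : (0:ℝ) < m := by positivity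
  constructor
  · intro _
    have cauchy : (∑ i, δ i) ^ 2 ≤ (m : ℝ) * ∑ i, δ i ^ 2 := by
      have := sq_sum_le_card_mul_sum_sq (s := (Finset.univ : Finset (Fin m))) (f := δ)
      simpa using this
    rw [← hd] at cauchy
    rw [div_mul_eq_mul_div, le_div_iff₀ (by positivity)]
    nlinarith [cauchy]
  · intro hlt
    -- q > 0 and d ≥ 2q hence m ≥ 3
    set i0 : Fin m := ⟨0, by omega⟩ with hi0
    set i1 : Fin m := ⟨m - 1, by omega⟩ with hi1
    have hne : i0 ≠ i1 := by
      simp [hi0, hi1, Fin.ext_iff]; omega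
    have hd2 : δ i0 + δ i1 ≤ d := by
      rw [hd, ← Finset.sum_pair hne]
      apply Finset.sum_le_sum_of_subset_of_nonneg (Finset.subset_univ _)
      intro i _ _; exact hδ i
    have hdnn : 0 ≤ d := by rw [hd]; exact Finset.sum_nonneg fun i _ => hδ i
    have hqpos : 0 < q := by
      rcases hq.lt_or_eq with h | h
      · exact h
      · exfalso; rw [← h] at hlt; simp at hlt; linarith
    have hm3 : 3 ≤ m := by
      by_contra h
      have : m = 2 := by omega
      subst this
      push_cast at hlt
      linarith
    have hm2 : (0:ℝ) < (m:ℝ) - 2 := by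
      have : (3:ℝ) ≤ m := by exact_mod_cast hm3
      linarith
    -- split sum of squares
    set T : Finset (Fin m) := Finset.univ \ {i0, i1} with hT
    have hTcard : (T.card : ℝ) = (m : ℝ) - 2 := by
      have : T.card = m - 2 := by
        rw [hT, Finset.card_sdiff_of_subset (Finset.subset_univ _)]
        simp [Finset.card_pair hne]
      rw [this]
      have : (2:ℕ) ≤ m := hm
      push_cast [Nat.cast_sub this]
      ring
    have hsplit : ∀ f : Fin m → ℝ, ∑ i, f i = f i0 + f i1 + ∑ i ∈ T, f i := by
      intro f
      rw [← Finset.sum_sdiff (Finset.subset_univ ({i0, i1} : Finset (Fin m))),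
        Finset.sum_pair hne, hT]
      ring
    set s := ∑ i ∈ T, δ i with hs
    have hds : d = δ i0 + δ i1 + s := by rw [hd, hsplit δ]
    have hsq : ∑ i, δ i ^ 2 = δ i0 ^ 2 + δ i1 ^ 2 + ∑ i ∈ T, δ i ^ 2 := by
      rw [hsplit (fun i => δ i ^ 2)]
    have cauchyT : s ^ 2 ≤ ((m : ℝ) - 2) * ∑ i ∈ T, δ i ^ 2 := by
      have := sq_sum_le_card_mul_sum_sq (s := T) (f := δ)
      rw [hTcard] at this
      exact_mod_cast this
    have hsnn : 0 ≤ s := Finset.sum_nonneg fun i _ => hδ i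
    -- lower bound for sum of squares
    have lower : 2 * q ^ 2 + (d - 2*q)^2 / ((m:ℝ) - 2) ≤ ∑ i, δ i ^ 2 := by
      rw [hsq]
      have hTsq : s ^ 2 / ((m:ℝ) - 2) ≤ ∑ i ∈ T, δ i ^ 2 := by
        rw [div_le_iff₀ hm2]; nlinarith [cauchyT]
      have h1' : q ≤ δ i0 := h1
      have h2' : q ≤ δ i1 := h2
      have hk1 : (1:ℝ) ≤ (m:ℝ) - 2 := by
        have : (3:ℝ) ≤ m := by exact_mod_cast hm3
        linarith
      have hA : 0 ≤ δ i0 + δ i1 - 2*q := by linarith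
      have hB : 0 ≤ ((m:ℝ)*q - d) + (((m:ℝ)-2)*q - s) := by
        have : q + q + s ≤ d := by rw [hds]; linarith
        linarith
      have main : 2 * q ^ 2 + (d - 2*q)^2 / ((m:ℝ) - 2) ≤
          δ i0 ^ 2 + δ i1 ^ 2 + s ^ 2 / ((m:ℝ) - 2) := by
        rw [← sub_nonneg]
        have expand : δ i0 ^ 2 + δ i1 ^ 2 + s ^ 2 / ((m:ℝ) - 2)
            - (2 * q ^ 2 + (d - 2*q)^2 / ((m:ℝ) - 2))
            = (((m:ℝ) - 2) * (δ i0 ^ 2 + δ i1 ^ 2) + s^2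
            - 2 * q ^ 2 * ((m:ℝ) - 2) - (δ i0 + δ i1 + s - 2*q)^2) / ((m:ℝ) - 2) := by
          rw [hds]; field_simp; ring
        rw [expand]
        apply div_nonneg _ hm2.le
        nlinarith [mul_nonneg hA hB, sq_nonneg (δ i0 - q), sq_nonneg (δ i1 - q),
          mul_nonneg (by linarith : (0:ℝ) ≤ (m:ℝ) - 3) (sq_nonneg (δ i0 - q)),
          mul_nonneg (by linarith : (0:ℝ) ≤ (m:ℝ) - 3) (sq_nonneg (δ i1 - q))]
      calc 2 * q ^ 2 + (d - 2*q)^2 / ((m:ℝ) - 2)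
          ≤ δ i0 ^ 2 + δ i1 ^ 2 + s ^ 2 / ((m:ℝ) - 2) := main
        _ ≤ δ i0 ^ 2 + δ i1 ^ 2 + ∑ i ∈ T, δ i ^ 2 := by linarith
    -- conclude
    have hid : (d - q)^2 - ((m:ℝ)-1)/(2*((m:ℝ)-2)) * (d-2*q)^2
        = (d^2 - (2*q^2 + (d-2*q)^2/((m:ℝ)-2)))/2 := by
      field_simp [hm2.ne']
      ring
    rw [hid]
    linarith [key, lower]
end

section
/- Fix a real number $d > 0$ and integers $m_1, m_2, m_3 \geq 2$ with $\frac{1}{m_1-1} + \frac{1}{m_2-1} + \frac{1}{m_3-1} \geq 1$. For $m \geq 2$ define $g_m(q) = \frac{m-1}{2m}(d+q)^2$ if $(m-1)q \leq d$ and $g_m(q) = d^2 - \frac{m-1}{2(m-2)}(d-q)^2$ if $(m-1)q > d$. Then for all nonnegative reals $p, p_1, p_2, p_3$ with $p + p_1 + p_2 + p_3 = d$, one has $g_{m_1}(p_1) + g_{m_2}(p_2) + g_{m_3}(p_3) \leq 2d^2$. -/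
/-! With `cᵢ = 1 / (mᵢ - 1)`, `g_{mᵢ}` is convex on `[0, cᵢ d]` and concave on `[cᵢ d, d]`, and
one splits according to which branch each `pᵢ` lies on. On the convex branch `g` lies below its
chord `q ↦ d (d + q) / 2` through `(-d, 0)`, which settles the case of three convex branches.
The concave branches are combined by the Engel form of Cauchy–Schwarz,
`(∑ uᵢ)² / ∑ wᵢ ≤ ∑ uᵢ² / wᵢ` with `uᵢ = d - pᵢ` and `wᵢ = 1 - cᵢ`; this is where `∑ cᵢ ≥ 1`
enters. For two convex branches, writing `pᵢ = cᵢ d - sᵢ` turns the bound into a quadratic form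
in `sᵢ ≥ 0` with nonnegative coefficients. -/

open Classical in
noncomputable def g (d : ℝ) (m : ℕ) (q : ℝ) : ℝ :=
  if ((m : ℝ) - 1) * q ≤ d then ((m : ℝ) - 1) / (2 * m) * (d + q) ^ 2
  else d ^ 2 - ((m : ℝ) - 1) / (2 * ((m : ℝ) - 2)) * (d - q) ^ 2

/-- The low branch `q ≤ c d` is convex, the high one concave; `c` stands for `1 / (m - 1)`. -/
noncomputable def gc (d c q : ℝ) : ℝ :=
  if q ≤ c * d then (d + q) ^ 2 / (1 + c) / 2 else d ^ 2 - (d - q) ^ 2 / (1 - c) / 2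

theorem g_eq_gc {m : ℕ} (hm : 2 ≤ m) (d q : ℝ) : g d m q = gc d (1 / ((m : ℝ) - 1)) q := by
  have hm1 : (0 : ℝ) < m - 1 := by
    have : (2 : ℝ) ≤ m := by exact_mod_cast hm
    linarith
  have hcond : ((m : ℝ) - 1) * q ≤ d ↔ q ≤ 1 / ((m : ℝ) - 1) * d := by
    rw [one_div_mul_eq_div, le_div_iff₀ hm1, mul_comm]
  have hsub : 1 - 1 / ((m : ℝ) - 1) = ((m : ℝ) - 2) / ((m : ℝ) - 1) := by
    field_simp
    ring
  unfold g gc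
  simp only [hcond, hsub]
  split_ifs
  · field_simp
    ring
  · -- also for `m = 2`, where both coefficients are the junk value `1 / 0 = 0`
    rw [div_div_eq_mul_div, div_div, mul_comm _ (2 : ℝ), mul_div_assoc]
    ring

theorem gc_cases {d : ℝ} (hd : 0 < d) (c : ℝ) {q : ℝ} (hq : q ≤ d) :
    (q ≤ c * d ∧ gc d c q = (d + q) ^ 2 / (1 + c) / 2) ∨
      (c < 1 ∧ gc d c q = d ^ 2 - (d - q) ^ 2 / (1 - c) / 2) := by
  unfold gc
  split_ifs with h
  · exact .inl ⟨h, rfl⟩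
  · refine .inr ⟨?_, rfl⟩
    by_contra! hc
    nlinarith

theorem add_sq_div_add_le {u v w₁ w₂ : ℝ} (hw₁ : 0 < w₁) (hw₂ : 0 < w₂) :
    (u + v) ^ 2 / (w₁ + w₂) ≤ u ^ 2 / w₁ + v ^ 2 / w₂ := by
  simpa [Fin.sum_univ_two] using
    Finset.sq_sum_div_le_sum_sq_div Finset.univ ![u, v] (g := ![w₁, w₂])
      (by simp [Fin.forall_fin_two, hw₁, hw₂])

theorem add_add_sq_div_add_add_le {u v w w₁ w₂ w₃ : ℝ} (hw₁ : 0 < w₁) (hw₂ : 0 < w₂)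
    (hw₃ : 0 < w₃) :
    (u + v + w) ^ 2 / (w₁ + w₂ + w₃) ≤ u ^ 2 / w₁ + v ^ 2 / w₂ + w ^ 2 / w₃ := by
  simpa [Fin.sum_univ_three] using
    Finset.sq_sum_div_le_sum_sq_div Finset.univ ![u, v, w] (g := ![w₁, w₂, w₃])
      (by simp [Fin.forall_fin_succ, hw₁, hw₂, hw₃])

theorem sq_add_div_le_mul {d c q : ℝ} (hc : 0 ≤ c) (hdq : 0 ≤ d + q) (hq : q ≤ c * d) :
    (d + q) ^ 2 / (1 + c) ≤ d * (d + q) := by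
  rw [div_le_iff₀ (by linarith)]
  nlinarith [mul_le_mul_of_nonneg_left (by linarith : d + q ≤ d * (1 + c)) hdq]

theorem sq_add_div_add_sq_add_div_le {d a b x y : ℝ} (ha : 0 < a) (ha₁ : a ≤ 1) (hb : 0 < b)
    (hb₁ : b ≤ 1) (hx : x ≤ a * d) (hy : y ≤ b * d) :
    (d + x) ^ 2 / (1 + a) + (d + y) ^ 2 / (1 + b) ≤ 2 * d ^ 2 + (x + y) ^ 2 / (a + b) := by
  obtain ⟨s, hs, rfl⟩ : ∃ s, 0 ≤ s ∧ x = a * d - s := ⟨a * d - x, by linarith, by ring⟩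
  obtain ⟨t, ht, rfl⟩ : ∃ t, 0 ≤ t ∧ y = b * d - t := ⟨b * d - y, by linarith, by ring⟩
  rw [← sub_nonneg]
  have key : 2 * d ^ 2 + (a * d - s + (b * d - t)) ^ 2 / (a + b)
        - ((d + (a * d - s)) ^ 2 / (1 + a) + (d + (b * d - t)) ^ 2 / (1 + b))
      = ((1 + b) * (1 - b) * s ^ 2 + 2 * (1 + a) * (1 + b) * (s * t)
          + (1 + a) * (1 - a) * t ^ 2) / ((a + b) * (1 + a) * (1 + b)) := by
    field_simp
    ring
  rw [key]
  have h₁ : 0 ≤ 1 - a := by linarith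
  have h₂ : 0 ≤ 1 - b := by linarith
  positivity

theorem low_low_low {d a b c x y z : ℝ} (hd : 0 < d) (ha : 0 ≤ a) (hb : 0 ≤ b) (hc : 0 ≤ c)
    (hx : 0 ≤ x) (hy : 0 ≤ y) (hz : 0 ≤ z) (hxa : x ≤ a * d) (hyb : y ≤ b * d)
    (hzc : z ≤ c * d) (hxyz : x + y + z ≤ d) :
    (d + x) ^ 2 / (1 + a) + (d + y) ^ 2 / (1 + b) + (d + z) ^ 2 / (1 + c) ≤ 4 * d ^ 2 := by
  have := sq_add_div_le_mul ha (by linarith) hxa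
  have := sq_add_div_le_mul hb (by linarith) hyb
  have := sq_add_div_le_mul hc (by linarith) hzc
  nlinarith

theorem low_low_high {d a b c x y z : ℝ} (ha : 0 < a) (ha₁ : a ≤ 1) (hb : 0 < b) (hb₁ : b ≤ 1)
    (hc₁ : c < 1) (habc : 1 ≤ a + b + c) (hx : 0 ≤ x) (hy : 0 ≤ y) (hxa : x ≤ a * d)
    (hyb : y ≤ b * d) (hxyz : x + y + z ≤ d) :
    (d + x) ^ 2 / (1 + a) + (d + y) ^ 2 / (1 + b) ≤ 2 * d ^ 2 + (d - z) ^ 2 / (1 - c) := by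
  calc (d + x) ^ 2 / (1 + a) + (d + y) ^ 2 / (1 + b)
      ≤ 2 * d ^ 2 + (x + y) ^ 2 / (a + b) := sq_add_div_add_sq_add_div_le ha ha₁ hb hb₁ hxa hyb
    _ ≤ 2 * d ^ 2 + (d - z) ^ 2 / (1 - c) := by
      gcongr (2 * d ^ 2 + ?_ ^ 2 / ?_) <;> linarith

theorem low_high_high {d a b c x y z : ℝ} (hb₁ : b < 1) (hc₁ : c < 1) (habc : 1 ≤ a + b + c)
    (hdx : 0 ≤ d + x) (hxyz : x + y + z ≤ d) :
    (d + x) ^ 2 / (1 + a) ≤ (d - y) ^ 2 / (1 - b) + (d - z) ^ 2 / (1 - c) := by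
  calc (d + x) ^ 2 / (1 + a)
      ≤ ((d - y) + (d - z)) ^ 2 / ((1 - b) + (1 - c)) := by
        gcongr ?_ ^ 2 / ?_ <;> linarith
    _ ≤ (d - y) ^ 2 / (1 - b) + (d - z) ^ 2 / (1 - c) :=
        add_sq_div_add_le (by linarith) (by linarith)

theorem high_high_high {d a b c x y z : ℝ} (hd : 0 ≤ d) (ha₁ : a < 1) (hb₁ : b < 1)
    (hc₁ : c < 1) (habc : 1 ≤ a + b + c) (hxyz : x + y + z ≤ d) :
    2 * d ^ 2 ≤ (d - x) ^ 2 / (1 - a) + (d - y) ^ 2 / (1 - b) + (d - z) ^ 2 / (1 - c) := by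
  calc 2 * d ^ 2 = (2 * d) ^ 2 / 2 := by ring
    _ ≤ ((d - x) + (d - y) + (d - z)) ^ 2 / ((1 - a) + (1 - b) + (1 - c)) := by
        gcongr ?_ ^ 2 / ?_ <;> linarith
    _ ≤ (d - x) ^ 2 / (1 - a) + (d - y) ^ 2 / (1 - b) + (d - z) ^ 2 / (1 - c) :=
        add_add_sq_div_add_add_le (by linarith) (by linarith) (by linarith)

theorem gc_add_gc_add_gc_le {d a b c x y z : ℝ} (hd : 0 < d) (ha : 0 < a) (ha₁ : a ≤ 1)
    (hb : 0 < b) (hb₁ : b ≤ 1) (hc : 0 < c) (hc₁ : c ≤ 1) (habc : 1 ≤ a + b + c)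
    (hx : 0 ≤ x) (hy : 0 ≤ y) (hz : 0 ≤ z) (hxyz : x + y + z ≤ d) :
    gc d a x + gc d b y + gc d c z ≤ 2 * d ^ 2 := by
  rcases gc_cases hd a (show x ≤ d by linarith) with ⟨hxa, ex⟩ | ⟨hxa, ex⟩ <;>
  rcases gc_cases hd b (show y ≤ d by linarith) with ⟨hyb, ey⟩ | ⟨hyb, ey⟩ <;>
  rcases gc_cases hd c (show z ≤ d by linarith) with ⟨hzc, ez⟩ | ⟨hzc, ez⟩ <;>
  rw [ex, ey, ez]
  · linarith [low_low_low hd ha.le hb.le hc.le hx hy hz hxa hyb hzc hxyz]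
  · linarith [low_low_high ha ha₁ hb hb₁ hzc habc hx hy hxa hyb hxyz]
  · linarith [low_low_high (z := y) ha ha₁ hc hc₁ hyb (by linarith) hx hz hxa hzc (by linarith)]
  · linarith [low_high_high hyb hzc habc (by linarith) hxyz]
  · linarith [low_low_high (z := x) hb hb₁ hc hc₁ hxa (by linarith) hy hz hyb hzc (by linarith)]
  · linarith [low_high_high (d := d) (a := b) (x := y) (y := x) (z := z) hxa hzc
      (by linarith) (by linarith) (by linarith)]
  · linarith [low_high_high (d := d) (a := c) (x := z) (y := x) (z := y) hxa hyb
      (by linarith) (by linarith) (by linarith)]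
  · linarith [high_high_high hd.le hxa hyb hzc habc hxyz]

theorem stmt7 (d : ℝ) (hd : 0 < d) (m₁ m₂ m₃ : ℕ)
    (h₁ : 2 ≤ m₁) (h₂ : 2 ≤ m₂) (h₃ : 2 ≤ m₃)
    (hsum : 1 / ((m₁ : ℝ) - 1) + 1 / ((m₂ : ℝ) - 1) + 1 / ((m₃ : ℝ) - 1) ≥ 1)
    (p p₁ p₂ p₃ : ℝ) (hp : 0 ≤ p) (hp₁ : 0 ≤ p₁) (hp₂ : 0 ≤ p₂) (hp₃ : 0 ≤ p₃)
    (hps : p + p₁ + p₂ + p₃ = d) :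
    g d m₁ p₁ + g d m₂ p₂ + g d m₃ p₃ ≤ 2 * d ^ 2 := by
  have recip_mem {m : ℕ} (hm : 2 ≤ m) : 0 < 1 / ((m : ℝ) - 1) ∧ 1 / ((m : ℝ) - 1) ≤ 1 := by
    have : (1 : ℝ) ≤ m - 1 := by
      have : (2 : ℝ) ≤ m := by exact_mod_cast hm
      linarith
    exact ⟨one_div_pos.mpr (by linarith), (div_le_one (by linarith)).mpr this⟩
  obtain ⟨hc₁, hc₁'⟩ := recip_mem h₁
  obtain ⟨hc₂, hc₂'⟩ := recip_mem h₂
  obtain ⟨hc₃, hc₃'⟩ := recip_mem h₃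
  rw [g_eq_gc h₁, g_eq_gc h₂, g_eq_gc h₃]
  exact gc_add_gc_add_gc_le hd hc₁ hc₁' hc₂ hc₂' hc₃ hc₃' hsum hp₁ hp₂ hp₃ (by linarith)
end

section
/- Fix a real number $d > 0$ and integers $m_1, m_2, m_3 \geq 2$ with $\frac{1}{m_1-1} + \frac{1}{m_2-1} + \frac{1}{m_3-1} > 1$, and define $g_m$ as follows: $g_m(q) = \frac{m-1}{2m}(d+q)^2$ if $(m-1)q \leq d$, and $g_m(q) = d^2 - \frac{m-1}{2(m-2)}(d-q)^2$ if $(m-1)q > d$. Then for all nonnegative reals $p, p_1, p_2, p_3$ with $p + p_1 + p_2 + p_3 = d$, one has $g_{m_1}(p_1) + g_{m_2}(p_2) + g_{m_3}(p_3) < 2d^2$ (strict inequality). -/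
noncomputable def G (d t q : ℝ) : ℝ :=
  if q ≤ t * d then (d + q) ^ 2 / (1 + t) / 2 else d ^ 2 - (d - q) ^ 2 / (1 - t) / 2

lemma g_eq_G {m : ℕ} (hm : 2 ≤ m) (d q : ℝ) : g d m q = G d (1 / ((m : ℝ) - 1)) q := by
  have ha : (0 : ℝ) < m - 1 := by
    have : (2 : ℝ) ≤ m := by exact_mod_cast hm
    linarith
  have hcond : ((m : ℝ) - 1) * q ≤ d ↔ q ≤ 1 / ((m : ℝ) - 1) * d := by
    rw [one_div_mul_eq_div, le_div_iff₀' ha]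
  unfold g G
  split_ifs with h₁ h₂ h₂
  · field_simp
    ring
  · exact absurd (hcond.mp h₁) h₂
  · exact absurd (hcond.mpr h₂) h₁
  · -- no `field_simp` here: for `m = 2` both coefficients are the junk value `x / 0 = 0`
    rw [one_sub_div ha.ne', div_div_eq_mul_div, show (m : ℝ) - 2 = m - 1 - 1 by ring,
      div_mul_eq_div_div]
    ring

lemma sq_add_div_add_le (x y : ℝ) {a b : ℝ} (ha : 0 < a) (hb : 0 < b) :
    (x + y) ^ 2 / (a + b) ≤ x ^ 2 / a + y ^ 2 / b := by
  simpa [Fin.sum_univ_two] using Finset.sq_sum_div_le_sum_sq_div Finset.univ ![x, y]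
    (g := ![a, b]) (by simp [Fin.forall_fin_two, ha, hb])

section
variable {d t q t₁ t₂ t₃ q₁ q₂ q₃ : ℝ}

lemma G_of_le (h : q ≤ t * d) : G d t q = (d + q) ^ 2 / (1 + t) / 2 := if_pos h

lemma G_of_lt (h : t * d < q) : G d t q = d ^ 2 - (d - q) ^ 2 / (1 - t) / 2 := if_neg h.not_ge

/-- A linear majorant of the convex first branch, touching it at `q = t d`. -/
lemma sq_add_div_one_add_le (hd : 0 < d) (hq : 0 ≤ q) (hqt : q ≤ t * d) (ht : t ≤ 1) :
    (d + q) ^ 2 / (1 + t) ≤ d ^ 2 + 3 / 2 * d * q - t * d ^ 2 / 2 := by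
  have ht₀ : 0 ≤ t := nonneg_of_mul_nonneg_left (hq.trans hqt) hd
  rw [div_le_iff₀ (by linarith)]
  nlinarith [mul_nonneg (sub_nonneg.mpr hqt) (by nlinarith : 0 ≤ (1 - t) * d + 2 * q)]

lemma sq_add_div_add_sq_add_div_le_s8 (h₁ : q₁ ≤ t₁ * d) (h₂ : q₂ ≤ t₂ * d)
    (ht₁ : t₁ ≤ 1) (ht₂ : t₂ ≤ 1) (ht : 0 < t₁ + t₂) :
    (d + q₁) ^ 2 / (1 + t₁) + (d + q₂) ^ 2 / (1 + t₂) ≤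
      2 * d ^ 2 + (q₁ + q₂) ^ 2 / (t₁ + t₂) := by
  have h1t₁ : 0 < 1 + t₁ := by linarith
  have h1t₂ : 0 < 1 + t₂ := by linarith
  have u₁ : 0 ≤ t₁ * d - q₁ := sub_nonneg.mpr h₁
  have u₂ : 0 ≤ t₂ * d - q₂ := sub_nonneg.mpr h₂
  have v₁ : 0 ≤ 1 - t₁ := sub_nonneg.mpr ht₁
  have v₂ : 0 ≤ 1 - t₂ := sub_nonneg.mpr ht₂
  rw [← sub_nonneg, show 2 * d ^ 2 + (q₁ + q₂) ^ 2 / (t₁ + t₂)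
      - ((d + q₁) ^ 2 / (1 + t₁) + (d + q₂) ^ 2 / (1 + t₂))
      = ((t₁ * d - q₁) ^ 2 * (1 - t₂) / (1 + t₁) + (t₂ * d - q₂) ^ 2 * (1 - t₁) / (1 + t₂)
        + 2 * (t₁ * d - q₁) * (t₂ * d - q₂)) / (t₁ + t₂) by field_simp; ring]
  positivity

lemma lt_one_of_mul_lt_of_le (hd : 0 < d) (h : t * d < q) (hq : q ≤ d) : t < 1 :=
  (mul_lt_iff_lt_one_left hd).mp (h.trans_le hq)

lemma G_add_G_add_G_lt_of_le_of_le_of_le (hd : 0 < d) (hq₁ : 0 ≤ q₁) (hq₂ : 0 ≤ q₂)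
    (hq₃ : 0 ≤ q₃) (hq : q₁ + q₂ + q₃ ≤ d) (ht : 1 < t₁ + t₂ + t₃)
    (ht₁ : t₁ ≤ 1) (ht₂ : t₂ ≤ 1) (ht₃ : t₃ ≤ 1)
    (h₁ : q₁ ≤ t₁ * d) (h₂ : q₂ ≤ t₂ * d) (h₃ : q₃ ≤ t₃ * d) :
    G d t₁ q₁ + G d t₂ q₂ + G d t₃ q₃ < 2 * d ^ 2 := by
  rw [G_of_le h₁, G_of_le h₂, G_of_le h₃]
  linarith [sq_add_div_one_add_le hd hq₁ h₁ ht₁, sq_add_div_one_add_le hd hq₂ h₂ ht₂,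
    sq_add_div_one_add_le hd hq₃ h₃ ht₃, mul_le_mul_of_nonneg_left hq hd.le,
    mul_lt_mul_of_pos_left ht (pow_pos hd 2)]

lemma G_add_G_add_G_lt_of_le_of_le_of_lt (hd : 0 < d) (hq₁ : 0 ≤ q₁) (hq₂ : 0 ≤ q₂)
    (hq : q₁ + q₂ + q₃ ≤ d) (ht : 1 < t₁ + t₂ + t₃) (ht₁ : t₁ ≤ 1) (ht₂ : t₂ ≤ 1)
    (h₁ : q₁ ≤ t₁ * d) (h₂ : q₂ ≤ t₂ * d) (h₃ : t₃ * d < q₃) :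
    G d t₁ q₁ + G d t₂ q₂ + G d t₃ q₃ < 2 * d ^ 2 := by
  have ht₃ : t₃ < 1 := lt_one_of_mul_lt_of_le hd h₃ (by linarith)
  rw [G_of_le h₁, G_of_le h₂, G_of_lt h₃]
  rcases (add_nonneg hq₁ hq₂).eq_or_lt with h₀ | h₀
  · -- the chain below is not strict here; use the linear majorant and `t₁ + t₂ > 0` instead
    obtain rfl : q₁ = 0 := by linarith
    obtain rfl : q₂ = 0 := by linarith
    have : 0 ≤ (d - q₃) ^ 2 / (1 - t₃) := div_nonneg (sq_nonneg _) (by linarith)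
    linarith [sq_add_div_one_add_le hd le_rfl h₁ ht₁, sq_add_div_one_add_le hd le_rfl h₂ ht₂,
      mul_lt_mul_of_pos_left (by linarith : 0 < t₁ + t₂) (pow_pos hd 2)]
  · suffices (d + q₁) ^ 2 / (1 + t₁) + (d + q₂) ^ 2 / (1 + t₂) <
        2 * d ^ 2 + (d - q₃) ^ 2 / (1 - t₃) by
      linarith
    calc (d + q₁) ^ 2 / (1 + t₁) + (d + q₂) ^ 2 / (1 + t₂)
        ≤ 2 * d ^ 2 + (q₁ + q₂) ^ 2 / (t₁ + t₂) :=
          sq_add_div_add_sq_add_div_le_s8 h₁ h₂ ht₁ ht₂ (by linarith)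
      _ ≤ 2 * d ^ 2 + (d - q₃) ^ 2 / (t₁ + t₂) := by
          gcongr <;> linarith
      _ < 2 * d ^ 2 + (d - q₃) ^ 2 / (1 - t₃) := by
          have : 0 < d - q₃ := by linarith
          gcongr 2 * d ^ 2 + _ / ?_
          linarith

lemma G_add_G_add_G_lt_of_le_of_lt_of_lt (hd : 0 < d) (hq₁ : 0 ≤ q₁) (hq₂ : 0 ≤ q₂)
    (hq₃ : 0 ≤ q₃) (hq : q₁ + q₂ + q₃ ≤ d) (ht : 1 < t₁ + t₂ + t₃)
    (h₁ : q₁ ≤ t₁ * d) (h₂ : t₂ * d < q₂) (h₃ : t₃ * d < q₃) :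
    G d t₁ q₁ + G d t₂ q₂ + G d t₃ q₃ < 2 * d ^ 2 := by
  have ht₂ : t₂ < 1 := lt_one_of_mul_lt_of_le hd h₂ (by linarith)
  have ht₃ : t₃ < 1 := lt_one_of_mul_lt_of_le hd h₃ (by linarith)
  rw [G_of_le h₁, G_of_lt h₂, G_of_lt h₃]
  suffices (d + q₁) ^ 2 / (1 + t₁) < (d - q₂) ^ 2 / (1 - t₂) + (d - q₃) ^ 2 / (1 - t₃) by
    linarith
  calc (d + q₁) ^ 2 / (1 + t₁)
      < (d + q₁) ^ 2 / ((1 - t₂) + (1 - t₃)) :=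
        div_lt_div_of_pos_left (by positivity) (by linarith) (by linarith)
    _ ≤ ((d - q₂) + (d - q₃)) ^ 2 / ((1 - t₂) + (1 - t₃)) := by
        gcongr ?_ ^ 2 / _
        linarith
    _ ≤ (d - q₂) ^ 2 / (1 - t₂) + (d - q₃) ^ 2 / (1 - t₃) :=
        sq_add_div_add_le _ _ (by linarith) (by linarith)

lemma add_add_lt_one_of_mul_lt (hd : 0 < d) (hq : q₁ + q₂ + q₃ ≤ d)
    (h₁ : t₁ * d < q₁) (h₂ : t₂ * d < q₂) (h₃ : t₃ * d < q₃) : t₁ + t₂ + t₃ < 1 :=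
  (mul_lt_iff_lt_one_left hd).mp (by linarith)

lemma G_add_G_add_G_lt (hd : 0 < d) (hq₁ : 0 ≤ q₁) (hq₂ : 0 ≤ q₂) (hq₃ : 0 ≤ q₃)
    (hq : q₁ + q₂ + q₃ ≤ d) (ht : 1 < t₁ + t₂ + t₃)
    (ht₁ : t₁ ≤ 1) (ht₂ : t₂ ≤ 1) (ht₃ : t₃ ≤ 1) :
    G d t₁ q₁ + G d t₂ q₂ + G d t₃ q₃ < 2 * d ^ 2 := by
  rcases le_or_gt q₁ (t₁ * d) with h₁ | h₁ <;> rcases le_or_gt q₂ (t₂ * d) with h₂ | h₂ <;>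
    rcases le_or_gt q₃ (t₃ * d) with h₃ | h₃
  · exact G_add_G_add_G_lt_of_le_of_le_of_le hd hq₁ hq₂ hq₃ hq ht ht₁ ht₂ ht₃ h₁ h₂ h₃
  · exact G_add_G_add_G_lt_of_le_of_le_of_lt hd hq₁ hq₂ hq ht ht₁ ht₂ h₁ h₂ h₃
  · linarith [G_add_G_add_G_lt_of_le_of_le_of_lt hd hq₁ hq₃ (by linarith) (by linarith)
      ht₁ ht₃ h₁ h₃ h₂]
  · exact G_add_G_add_G_lt_of_le_of_lt_of_lt hd hq₁ hq₂ hq₃ hq ht h₁ h₂ h₃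
  · linarith [G_add_G_add_G_lt_of_le_of_le_of_lt hd hq₂ hq₃ (by linarith) (by linarith)
      ht₂ ht₃ h₂ h₃ h₁]
  · linarith [G_add_G_add_G_lt_of_le_of_lt_of_lt hd hq₂ hq₁ hq₃ (by linarith) (by linarith)
      h₂ h₁ h₃]
  · linarith [G_add_G_add_G_lt_of_le_of_lt_of_lt hd hq₃ hq₁ hq₂ (by linarith) (by linarith)
      h₃ h₁ h₂]
  · exact absurd ht (lt_asymm (add_add_lt_one_of_mul_lt hd hq h₁ h₂ h₃))

end

theorem stmt8 (d : ℝ) (hd : 0 < d) (m₁ m₂ m₃ : ℕ)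
    (h₁ : 2 ≤ m₁) (h₂ : 2 ≤ m₂) (h₃ : 2 ≤ m₃)
    (hsum : 1 / ((m₁ : ℝ) - 1) + 1 / ((m₂ : ℝ) - 1) + 1 / ((m₃ : ℝ) - 1) > 1)
    (p p₁ p₂ p₃ : ℝ) (hp : 0 ≤ p) (hp₁ : 0 ≤ p₁) (hp₂ : 0 ≤ p₂) (hp₃ : 0 ≤ p₃)
    (hps : p + p₁ + p₂ + p₃ = d) :
    g d m₁ p₁ + g d m₂ p₂ + g d m₃ p₃ < 2 * d ^ 2 := by
  have ht {m : ℕ} (hm : 2 ≤ m) : 1 / ((m : ℝ) - 1) ≤ 1 := by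
    have : (2 : ℝ) ≤ m := by exact_mod_cast hm
    exact div_le_one_of_le₀ (by linarith) (by linarith)
  rw [g_eq_G h₁, g_eq_G h₂, g_eq_G h₃]
  exact G_add_G_add_G_lt hd hp₁ hp₂ hp₃ (by linarith) hsum (ht h₁) (ht h₂) (ht h₃)
end

section
/- Let $m_1, m_2, m_3, m_4$ be integers with $m_1, m_2 \geq 2$, $m_3, m_4 \geq 3$, and $\frac{1}{m_1-1}+\frac{1}{m_2-1}+\frac{1}{m_3-1}+\frac{1}{m_4-1} \leq 3$. Then $\frac{3}{4} - \frac{1}{2m_1} - \frac{1}{2m_2} - \frac{1}{8(m_3-2)} - \frac{1}{8(m_4-2)} \geq 0$, and the inequality is strict unless $(m_1,m_2,m_3,m_4)$ is a permutation-equivalent tuple with $m_1 = m_2 = 2$ and $m_3 = m_4 = 3$. -/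
private lemma aux1 {x : ℝ} (hx : 2 ≤ x) : 1 / (2 * x) ≤ 1 / 4 := by
  rw [div_le_div_iff₀ (by linarith) (by norm_num)]; linarith

private lemma aux1' {x : ℝ} (hx : 3 ≤ x) : 1 / (2 * x) < 1 / 4 := by
  rw [div_lt_div_iff₀ (by linarith) (by norm_num)]; linarith

private lemma aux2 {x : ℝ} (hx : 3 ≤ x) : 1 / (8 * (x - 2)) ≤ 1 / 8 := by
  rw [div_le_div_iff₀ (by linarith) (by norm_num)]; linarith

private lemma aux2' {x : ℝ} (hx : 4 ≤ x) : 1 / (8 * (x - 2)) < 1 / 8 := by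
  rw [div_lt_div_iff₀ (by linarith) (by norm_num)]; linarith

theorem stmt14 (m₁ m₂ m₃ m₄ : ℤ) (h₁ : 2 ≤ m₁) (h₂ : 2 ≤ m₂)
    (h₃ : 3 ≤ m₃) (h₄ : 3 ≤ m₄)
    (hsum : 1 / ((m₁ : ℝ) - 1) + 1 / ((m₂ : ℝ) - 1) + 1 / ((m₃ : ℝ) - 1) +
      1 / ((m₄ : ℝ) - 1) ≤ 3) :
    0 ≤ 3 / 4 - 1 / (2 * (m₁ : ℝ)) - 1 / (2 * (m₂ : ℝ)) -
        1 / (8 * ((m₃ : ℝ) - 2)) - 1 / (8 * ((m₄ : ℝ) - 2)) ∧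
    (¬ (m₁ = 2 ∧ m₂ = 2 ∧ m₃ = 3 ∧ m₄ = 3) →
      0 < 3 / 4 - 1 / (2 * (m₁ : ℝ)) - 1 / (2 * (m₂ : ℝ)) -
        1 / (8 * ((m₃ : ℝ) - 2)) - 1 / (8 * ((m₄ : ℝ) - 2))) := by
  have r₁ : (2:ℝ) ≤ (m₁:ℝ) := by exact_mod_cast h₁
  have r₂ : (2:ℝ) ≤ (m₂:ℝ) := by exact_mod_cast h₂
  have r₃ : (3:ℝ) ≤ (m₃:ℝ) := by exact_mod_cast h₃
  have r₄ : (3:ℝ) ≤ (m₄:ℝ) := by exact_mod_cast h₄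
  have a1 := aux1 r₁
  have a2 := aux1 r₂
  have a3 := aux2 r₃
  have a4 := aux2 r₄
  refine ⟨by linarith, fun hne => ?_⟩
  rcases eq_or_lt_of_le h₁ with e₁ | l₁
  · rcases eq_or_lt_of_le h₂ with e₂ | l₂
    · rcases eq_or_lt_of_le h₃ with e₃ | l₃
      · rcases eq_or_lt_of_le h₄ with e₄ | l₄
        · exact absurd ⟨e₁.symm, e₂.symm, e₃.symm, e₄.symm⟩ hne
        · have : (4:ℝ) ≤ (m₄:ℝ) := by exact_mod_cast l₄
          have := aux2' this; linarith
      · have : (4:ℝ) ≤ (m₃:ℝ) := by exact_mod_cast l₃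
        have := aux2' this; linarith
    · have : (3:ℝ) ≤ (m₂:ℝ) := by exact_mod_cast l₂
      have := aux1' this; linarith
  · have : (3:ℝ) ≤ (m₁:ℝ) := by exact_mod_cast l₁
    have := aux1' this; linarith
end
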